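/- arXiv:1006.1049 — 11 statements merged into one kernel-verified Lean document; each statement's English description precedes it below -/
import Mathlib

section
/- Any set S of vectors in a finite-dimensional normed space such that every vector in S has norm at least 1+ε (for some fixed ε > 0) and ‖x+y‖ = 2 for all distinct x, y ∈ S, is finite. -/
/-!
Since `2x = (x + y) + (x - y)`, a point `x ∈ S` of norm at least `1 + ε` lies at distance at least
`2ε` from every other point `y ∈ S`. Fixing `a ∈ S`, every other point of `S` lies on the sphere of
radius `2` about `-a`, so `S` is bounded; a bounded, uniformly separated subset of a proper space
is finite.
-/

open Metric

theorem Set.Finite.of_isBounded_of_pairwise_le_dist {α : Type*} [MetricSpace α] [ProperSpace α]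
    {s : Set α} {r : ℝ} (hr : 0 < r) (hbdd : Bornology.IsBounded s)
    (hsep : s.Pairwise fun x y => r ≤ dist x y) : s.Finite := by
  have hdisc : IsDiscrete s :=
    ⟨.of_forall_le_dist hr fun x y hxy => hsep x.2 y.2 (Subtype.coe_ne_coe.2 hxy)⟩
  simpa using finite_isBounded_inter_isClosed hdisc hbdd (isClosed_of_pairwise_le_dist hr hsep)

theorem two_mul_norm_le_norm_add_add_norm_sub {E : Type*} [SeminormedAddCommGroup E]
    [NormedSpace ℝ E] (x y : E) : 2 * ‖x‖ ≤ ‖x + y‖ + ‖x - y‖ :=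
  calc 2 * ‖x‖ = ‖(2 : ℝ) • x‖ := by rw [norm_smul, Real.norm_two]
    _ = ‖(x + y) + (x - y)‖ := by congr 1; module
    _ ≤ ‖x + y‖ + ‖x - y‖ := norm_add_le _ _

theorem mset_separated_finite
    (X : Type*) [NormedAddCommGroup X] [NormedSpace ℝ X] [FiniteDimensional ℝ X]
    (ε : ℝ) (hε : 0 < ε) (S : Set X)
    (hnorm : ∀ x ∈ S, 1 + ε ≤ ‖x‖)
    (hmid : ∀ x ∈ S, ∀ y ∈ S, x ≠ y → ‖x + y‖ = 2) :
    S.Finite := by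
  rcases S.eq_empty_or_nonempty with rfl | ⟨a, ha⟩
  · exact Set.finite_empty
  have hbdd : Bornology.IsBounded S := by
    refine (isBounded_sphere (x := -a) (r := 2)).insert a |>.subset fun x hx => ?_
    rcases eq_or_ne x a with rfl | hxa
    · exact Set.mem_insert _ _
    · exact Or.inr (by rw [mem_sphere, dist_eq_norm, sub_neg_eq_add, hmid x hx a ha hxa])
  refine .of_isBounded_of_pairwise_le_dist (by positivity : 0 < 2 * ε) hbdd fun x hx y hy hxy => ?_
  have := two_mul_norm_le_norm_add_add_norm_sub x y
  rw [hmid x hx y hy hxy, ← dist_eq_norm] at this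
  linarith [hnorm x hx]
end

section
/- Any M-set in a finite-dimensional normed space is countable. -/
/-! The open balls `B(x, ‖x‖ - 1)`, `x ∈ S`, are nonempty and pairwise disjoint, because
`‖x‖ + ‖y‖ ≤ ‖x + y‖ + ‖x - y‖ = 2 + ‖x - y‖` for distinct `x, y ∈ S`. A finite-dimensional
space is separable, so it contains only countably many pairwise disjoint nonempty open sets. -/

open Metric

theorem norm_add_norm_le_norm_add_add_norm_sub {E : Type*} [SeminormedAddCommGroup E]
    [NormedSpace ℝ E] (x y : E) : ‖x‖ + ‖y‖ ≤ ‖x + y‖ + ‖x - y‖ := by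
  have hx : 2 * ‖x‖ ≤ ‖x + y‖ + ‖x - y‖ := by
    calc 2 * ‖x‖ = ‖(x + y) + (x - y)‖ := by
          rw [show (x + y) + (x - y) = (2 : ℝ) • x by module, norm_smul, Real.norm_two]
      _ ≤ ‖x + y‖ + ‖x - y‖ := norm_add_le _ _
  have hy : 2 * ‖y‖ ≤ ‖x + y‖ + ‖x - y‖ := by
    calc 2 * ‖y‖ = ‖(x + y) - (x - y)‖ := by
          rw [show (x + y) - (x - y) = (2 : ℝ) • y by module, norm_smul, Real.norm_two]
      _ ≤ ‖x + y‖ + ‖x - y‖ := norm_sub_le _ _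
  linarith

theorem disjoint_ball_norm_sub_one_of_norm_add_le_two {E : Type*} [SeminormedAddCommGroup E]
    [NormedSpace ℝ E] {x y : E} (h : ‖x + y‖ ≤ 2) :
    Disjoint (ball x (‖x‖ - 1)) (ball y (‖y‖ - 1)) := by
  apply ball_disjoint_ball
  rw [dist_eq_norm]
  linarith [norm_add_norm_le_norm_add_add_norm_sub x y]

theorem mset_countable
    (X : Type*) [NormedAddCommGroup X] [NormedSpace ℝ X] [FiniteDimensional ℝ X]
    (S : Set X)
    (hnorm : ∀ x ∈ S, 1 < ‖x‖)
    (hmid : ∀ x ∈ S, ∀ y ∈ S, x ≠ y → ‖x + y‖ = 2) :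
    S.Countable := by
  refine Set.PairwiseDisjoint.countable_of_isOpen (s := fun x => ball x (‖x‖ - 1))
    (fun x hx y hy hxy => ?_) (fun _ _ => isOpen_ball) (fun x hx => ?_)
  · exact disjoint_ball_norm_sub_one_of_norm_add_le_two (hmid x hx y hy hxy).le
  · exact nonempty_ball.2 (sub_pos.2 (hnorm x hx))
end

section
/- Let S be a set of unit vectors in a finite-dimensional normed space. If there exists a unit vector y in the relative interior of the convex hull of S, then every point of the convex hull of S is a unit vector. -/
/-!
A convex function that attains its maximum over a set at a relative interior point `y` is
constant there: for `z` in the set, `y + t • (y - z)` still lies in the set for small `t > 0`, and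
`y` is a proper convex combination of that point and `z`, forcing `f y ≤ f z`. The norm is convex
and bounded by `1 = ‖y‖` on the convex hull of unit vectors.
-/

open Filter Topology

section IntrinsicInterior

variable {E : Type*} [AddCommGroup E] [Module ℝ E] [TopologicalSpace E]
  [IsTopologicalAddGroup E] [ContinuousSMul ℝ E] {s : Set E} {y z : E}

theorem exists_pos_add_smul_sub_mem_of_mem_intrinsicInterior
    (hy : y ∈ intrinsicInterior ℝ s) (hz : z ∈ affineSpan ℝ s) :
    ∃ t : ℝ, 0 < t ∧ y + t • (y - z) ∈ s := by
  obtain ⟨y', hy', rfl⟩ := mem_intrinsicInterior.mp hy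
  let c : ℝ → affineSpan ℝ s := fun t ↦
    ⟨t • ((y' : E) -ᵥ z) +ᵥ (y' : E), AffineSubspace.vadd_mem_of_mem_direction
      (Submodule.smul_mem _ _ (AffineSubspace.vsub_mem_direction y'.2 hz)) y'.2⟩
  have hc : Continuous c := by fun_prop
  have hc0 : c 0 = y' := by ext; simp [c]
  have hnhds : ∀ᶠ t in 𝓝 (0 : ℝ), c t ∈ interior ((↑) ⁻¹' s) :=
    hc.continuousAt.preimage_mem_nhds (hc0 ▸ isOpen_interior.mem_nhds hy')
  obtain ⟨t, hct, ht⟩ : ∃ t : ℝ, c t ∈ interior ((↑) ⁻¹' s) ∧ 0 < t :=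
    ((hnhds.filter_mono nhdsWithin_le_nhds).and self_mem_nhdsWithin).exists (f := 𝓝[>] 0)
  exact ⟨t, ht, by simpa [c, add_comm] using interior_subset hct⟩

end IntrinsicInterior

section ConvexOn

variable {E : Type*} [AddCommGroup E] [Module ℝ E] {s : Set E} {f : E → ℝ} {y z : E}

theorem ConvexOn.le_of_isMaxOn_of_add_smul_sub_mem (hf : ConvexOn ℝ s f) (hmax : IsMaxOn f s y)
    (hz : z ∈ s) {t : ℝ} (ht : 0 < t) (hw : y + t • (y - z) ∈ s) : f y ≤ f z := by
  have ht1 : 1 + t ≠ 0 := by positivity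
  set a := (1 + t)⁻¹
  have ha : 0 < a := by positivity
  have hsum : a + t * a = 1 := by rw [← one_add_mul, mul_inv_cancel₀ ht1]
  have hy_eq : a • (y + t • (y - z)) + (t * a) • z = y := by
    calc a • (y + t • (y - z)) + (t * a) • z = a • ((1 + t) • y) := by module
      _ = y := by rw [smul_smul, inv_mul_cancel₀ ht1, one_smul]
  have hconv := hf.2 hw hz ha.le (by positivity) hsum
  rw [hy_eq, smul_eq_mul, smul_eq_mul] at hconv
  have hw_le : a * f (y + t • (y - z)) ≤ a * f y := mul_le_mul_of_nonneg_left (hmax hw) ha.le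
  have hscaled : t * a * f y ≤ t * a * f z := by
    linear_combination hconv + hw_le + f y * hsum
  exact le_of_mul_le_mul_left hscaled (by positivity)

theorem ConvexOn.eq_of_isMaxOn_of_mem_intrinsicInterior [TopologicalSpace E]
    [IsTopologicalAddGroup E] [ContinuousSMul ℝ E] (hf : ConvexOn ℝ s f) (hmax : IsMaxOn f s y)
    (hy : y ∈ intrinsicInterior ℝ s) (hz : z ∈ s) : f z = f y := by
  obtain ⟨t, ht, hw⟩ :=
    exists_pos_add_smul_sub_mem_of_mem_intrinsicInterior hy (subset_affineSpan ℝ s hz)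
  exact (hmax hz).antisymm (hf.le_of_isMaxOn_of_add_smul_sub_mem hmax hz ht hw)

end ConvexOn

theorem unit_vectors_convex_hull_general
    (X : Type*) [NormedAddCommGroup X] [NormedSpace ℝ X]
    (S : Set X) (hS : ∀ x ∈ S, ‖x‖ = 1)
    (y : X) (hy : ‖y‖ = 1) (hyint : y ∈ intrinsicInterior ℝ (convexHull ℝ S)) :
    ∀ z ∈ convexHull ℝ S, ‖z‖ = 1 := by
  have hball : convexHull ℝ S ⊆ Metric.closedBall 0 1 :=
    convexHull_min (fun x hx ↦ by simp [hS x hx]) (convex_closedBall 0 1)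
  have hmax : IsMaxOn (‖·‖) (convexHull ℝ S) y := fun z hz ↦ by
    simpa [hy] using hball hz
  intro z hz
  rw [← hy]
  exact (convexOn_norm (convex_convexHull ℝ S)).eq_of_isMaxOn_of_mem_intrinsicInterior
    hmax hyint hz

theorem unit_vectors_convex_hull
    (X : Type*) [NormedAddCommGroup X] [NormedSpace ℝ X] [FiniteDimensional ℝ X]
    (S : Set X) (hS : ∀ x ∈ S, ‖x‖ = 1)
    (y : X) (hy : ‖y‖ = 1) (hyint : y ∈ intrinsicInterior ℝ (convexHull ℝ S)) :
    ∀ z ∈ convexHull ℝ S, ‖z‖ = 1 :=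
  unit_vectors_convex_hull_general X S hS y hy hyint
end

section
/- Sharpened Carathéodory: Let R ⊆ ℝ^d and y ∈ relint(conv R). Then for any x ∈ R there exists an affinely independent subset S ⊆ R with at most d+1 points such that x ∈ S and y ∈ relint(conv S). -/
/-!
The point `y` lies in the relative interior of `conv R`, so the segment from `x` through `y` can be
prolonged a little beyond `y` inside `conv R`, to a point `z`. Writing `z` as a convex combination
of finitely many points of `R`, `y` becomes a convex combination of these points and `x` with
positive weight on `x`. Carathéodory's elimination then removes points one at a time while the
points are affinely dependent; shifting the weights along an affine dependence in which `x` has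
nonpositive coefficient never removes `x`. The result is a simplex with vertices in `R`, one of
them `x`, in which `y` has positive barycentric coordinates, i.e. lies in the relative interior.
-/

open Set Finset Topology

section ConvexCombination

variable {𝕜 E : Type*} [Field 𝕜] [LinearOrder 𝕜] [AddCommGroup E] [Module 𝕜 E]

variable (𝕜) in
def IsPositiveConvexCombination (s : Finset E) (y : E) : Prop :=
  ∃ w : E → 𝕜, (∀ u ∈ s, 0 < w u) ∧ ∑ u ∈ s, w u = 1 ∧ ∑ u ∈ s, w u • u = y

theorem isPositiveConvexCombination_filter_pos {s : Finset E} {y : E} {w : E → 𝕜}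
    (hw₀ : ∀ u ∈ s, 0 ≤ w u) (hw₁ : ∑ u ∈ s, w u = 1) (hwy : ∑ u ∈ s, w u • u = y) :
    IsPositiveConvexCombination 𝕜 (s.filter (0 < w ·)) y := by
  have hne : ∀ u ∈ s, w u ≠ 0 → 0 < w u := fun u hu h ↦ (hw₀ u hu).lt_of_ne' h
  refine ⟨w, fun u hu ↦ (mem_filter.mp hu).2, ?_, ?_⟩
  · rwa [sum_filter_of_ne hne]
  · rwa [sum_filter_of_ne fun u hu h ↦ hne u hu (left_ne_zero_of_smul h)]

variable [IsStrictOrderedRing 𝕜]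

theorem exists_isPositiveConvexCombination_of_mem_openSegment {s : Finset E} {x y z : E}
    (hx : x ∈ s) (hz : z ∈ convexHull 𝕜 (s : Set E)) (hy : y ∈ openSegment 𝕜 x z) :
    ∃ t ⊆ s, x ∈ t ∧ IsPositiveConvexCombination 𝕜 t y := by
  classical
  obtain ⟨v, hv₀, hv₁, hvz⟩ := Finset.mem_convexHull'.mp hz
  obtain ⟨a, b, ha, hb, hab, rfl⟩ := hy
  let w : E → 𝕜 := fun u ↦ (if u = x then a else 0) + b * v u
  have hw₀ : ∀ u ∈ s, 0 ≤ w u := fun u hu ↦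
    add_nonneg (by split_ifs <;> simp [ha.le]) (mul_nonneg hb.le (hv₀ u hu))
  have hwx : 0 < w x := by
    simpa [w] using add_pos_of_pos_of_nonneg ha (mul_nonneg hb.le (hv₀ x hx))
  have hw₁ : ∑ u ∈ s, w u = 1 := by
    simp [w, sum_add_distrib, ← mul_sum, hv₁, hx, hab]
  have hwy : ∑ u ∈ s, w u • u = a • x + b • z := by
    simp [w, add_smul, sum_add_distrib, ite_smul, mul_smul, ← smul_sum, hvz, hx]
  exact ⟨_, filter_subset _ _, mem_filter.mpr ⟨hx, hwx⟩,
    isPositiveConvexCombination_filter_pos hw₀ hw₁ hwy⟩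

namespace IsPositiveConvexCombination

theorem exists_ssubset_of_not_affineIndependent {s : Finset E} {x y : E}
    (h : IsPositiveConvexCombination 𝕜 s y) (hx : x ∈ s)
    (hs : ¬AffineIndependent 𝕜 ((↑) : s → E)) :
    ∃ t ⊂ s, x ∈ t ∧ IsPositiveConvexCombination 𝕜 t y := by
  obtain ⟨w, hw₀, hw₁, hwy⟩ := h
  obtain ⟨g, hgv, hg₁, hg⟩ := exists_nontrivial_relation_sum_zero_of_not_affine_ind hs
  wlog hgx : g x ≤ 0 generalizing g
  · exact this (-g) (by simp [neg_smul, hgv]) (by simp [hg₁]) (by simpa using hg)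
      (by simpa using (not_le.mp hgx).le)
  -- `c` below is the largest step along `g` keeping all weights nonnegative: the weight of `i`
  -- drops to zero, while that of `x` does not decrease since `g x ≤ 0`.
  obtain ⟨u, hu, hgu⟩ := exists_pos_of_sum_zero_of_exists_nonzero g hg₁ hg
  obtain ⟨i, hi, hmin⟩ := (s.filter (0 < g ·)).exists_min_image (fun u ↦ w u / g u)
    ⟨u, mem_filter.mpr ⟨hu, hgu⟩⟩
  obtain ⟨his, hgi⟩ := mem_filter.mp hi
  set c := w i / g i
  have hc : 0 ≤ c := div_nonneg (hw₀ i his).le hgi.le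
  let k : E → 𝕜 := fun u ↦ w u - c * g u
  have hk₀ : ∀ u ∈ s, 0 ≤ k u := by
    intro u hu
    rcases lt_or_ge 0 (g u) with hgu | hgu
    · have := hmin u (mem_filter.mpr ⟨hu, hgu⟩)
      rw [div_le_div_iff₀ hgi hgu] at this
      simp only [k, c, sub_nonneg, div_mul_eq_mul_div, div_le_iff₀ hgi]
      linarith
    · nlinarith [hw₀ u hu]
  have hki : k i = 0 := by simp [k, c, hgi.ne']
  have hkx : 0 < k x := by nlinarith [hw₀ x hx]
  have hk₁ : ∑ u ∈ s, k u = 1 := by simp [k, sum_sub_distrib, ← mul_sum, hw₁, hg₁]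
  have hky : ∑ u ∈ s, k u • u = y := by
    simp [k, sub_smul, mul_smul, sum_sub_distrib, ← smul_sum, hwy, hgv]
  exact ⟨_, filter_ssubset.mpr ⟨i, his, by simp [hki]⟩, mem_filter.mpr ⟨hx, hkx⟩,
    isPositiveConvexCombination_filter_pos hk₀ hk₁ hky⟩

theorem exists_affineIndependent_subset {s : Finset E} {x y : E}
    (h : IsPositiveConvexCombination 𝕜 s y) (hx : x ∈ s) :
    ∃ t ⊆ s, x ∈ t ∧ AffineIndependent 𝕜 ((↑) : t → E) ∧
      IsPositiveConvexCombination 𝕜 t y := by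
  induction s using Finset.strongInduction with
  | H s ih =>
    by_cases hs : AffineIndependent 𝕜 ((↑) : s → E)
    · exact ⟨s, Finset.Subset.rfl, hx, hs, h⟩
    obtain ⟨t, hts, hxt, ht⟩ := h.exists_ssubset_of_not_affineIndependent hx hs
    obtain ⟨r, hrt, hxr, hr, hry⟩ := ih t hts ht hxt
    exact ⟨r, hrt.trans hts.subset, hxr, hr, hry⟩

end IsPositiveConvexCombination

end ConvexCombination

theorem exists_mem_openSegment_of_mem_intrinsicInterior {E : Type*} [AddCommGroup E]
    [Module ℝ E] [TopologicalSpace E] [IsTopologicalAddGroup E] [ContinuousSMul ℝ E]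
    {C : Set E} {x y : E} (hx : x ∈ C) (hy : y ∈ intrinsicInterior ℝ C) :
    ∃ z ∈ C, y ∈ openSegment ℝ x z := by
  obtain ⟨y₀, hy₀, rfl⟩ := mem_intrinsicInterior.mp hy
  let f : ℝ → affineSpan ℝ C := fun t ↦
    ⟨AffineMap.lineMap x y₀ t, AffineMap.lineMap_mem t (subset_affineSpan ℝ C hx) y₀.2⟩
  have hf : Continuous f := (AffineMap.lineMap_continuous).subtype_mk _
  have hf₁ : f 1 ∈ interior (((↑) : affineSpan ℝ C → E) ⁻¹' C) := by
    simpa [f] using hy₀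
  obtain ⟨t, ht, ht₁⟩ := (((hf.tendsto 1).eventually (isOpen_interior.mem_nhds hf₁)).filter_mono
    nhdsWithin_le_nhds |>.and self_mem_nhdsWithin).exists (f := 𝓝[>] (1 : ℝ))
  refine ⟨AffineMap.lineMap x y₀ t, interior_subset (s := ((↑) : affineSpan ℝ C → E) ⁻¹' C) ht, ?_⟩
  have ht₀ : (0 : ℝ) < t := zero_lt_one.trans ht₁
  convert lineMap_mem_openSegment ℝ x (AffineMap.lineMap x (y₀ : E) t)
    ⟨inv_pos.mpr ht₀, inv_lt_one_of_one_lt₀ ht₁⟩ using 1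
  simp [inv_mul_cancel₀ ht₀.ne']

theorem AffineIndependent.affineCombination_mem_intrinsicInterior_convexHull {ι E : Type*}
    [Fintype ι] [NormedAddCommGroup E] [NormedSpace ℝ E] {p : ι → E}
    (hp : AffineIndependent ℝ p) {w : ι → ℝ} (hw₀ : ∀ i, 0 < w i) (hw₁ : ∑ i, w i = 1) :
    Finset.univ.affineCombination ℝ p w ∈ intrinsicInterior ℝ (convexHull ℝ (range p)) := by
  obtain ⟨i₀⟩ : Nonempty ι := by
    by_contra h
    simp [not_nonempty_iff.mp h] at hw₁
  -- Translate `p i₀` to the origin and view the simplex as a full-dimensional one in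
  -- `vectorSpan ℝ (range p)`, where its interior is given by positive barycentric coordinates.
  let W := vectorSpan ℝ (range p)
  let g : ι → W := fun i ↦ ⟨p i -ᵥ p i₀, vsub_mem_vectorSpan ℝ (mem_range_self i)
    (mem_range_self i₀)⟩
  let φ : W →ᵃⁱ[ℝ] E :=
    (AffineIsometryEquiv.constVAdd ℝ E (p i₀)).toAffineIsometry.comp W.subtypeₗᵢ.toAffineIsometry
  have hφg : φ ∘ g = p := funext fun i ↦ by simp [φ, g]
  have hg : AffineIndependent ℝ g := AffineIndependent.of_comp φ.toAffineMap (by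
    rwa [AffineIsometry.coe_toAffineMap, hφg])
  have hW : Fintype.card ι = Module.finrank ℝ W + 1 := by
    have hcard := Nat.succ_pred_eq_of_pos (Fintype.card_pos_iff.mpr ⟨i₀⟩)
    rw [hp.finrank_vectorSpan hcard.symm]
    exact hcard.symm
  let b : AffineBasis ι ℝ W := ⟨g, hg, hg.affineSpan_eq_top_iff_card_eq_finrank_add_one.mpr hW⟩
  have hb : Finset.univ.affineCombination ℝ g w ∈ interior (convexHull ℝ (range b)) := by
    rw [b.interior_convexHull]
    intro i
    change 0 < b.coord i (Finset.univ.affineCombination ℝ b w)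
    rw [b.coord_apply_combination_of_mem (Finset.mem_univ i) hw₁]
    exact hw₀ i
  have hφ : φ (Finset.univ.affineCombination ℝ g w) = Finset.univ.affineCombination ℝ p w := by
    rw [← AffineIsometry.coe_toAffineMap, Finset.map_affineCombination _ _ _ hw₁,
      AffineIsometry.coe_toAffineMap, hφg]
  have hconv : convexHull ℝ (range p) = φ '' convexHull ℝ (range b) := by
    rw [← AffineIsometry.coe_toAffineMap, AffineMap.image_convexHull, ← range_comp]
    exact congrArg _ (congrArg Set.range hφg.symm)
  rw [hconv, AffineIsometry.intrinsicInterior_image, ← hφ]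
  exact mem_image_of_mem _ (interior_subset_intrinsicInterior hb)

namespace IsPositiveConvexCombination

theorem mem_intrinsicInterior_convexHull {F : Type*} [NormedAddCommGroup F] [NormedSpace ℝ F]
    {s : Finset F} {y : F} (h : IsPositiveConvexCombination ℝ s y)
    (hs : AffineIndependent ℝ ((↑) : s → F)) :
    y ∈ intrinsicInterior ℝ (convexHull ℝ (s : Set F)) := by
  obtain ⟨w, hw₀, hw₁, rfl⟩ := h
  have hw₁' : ∑ u : s, w u = 1 := by rwa [Finset.sum_coe_sort s w]
  have := hs.affineCombination_mem_intrinsicInterior_convexHull (w := w ∘ (↑))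
    (fun u ↦ hw₀ u u.2) hw₁'
  rwa [Subtype.range_coe, ← Finset.attach_eq_univ, Finset.attach_affineCombination_coe,
    Finset.affineCombination_eq_linear_combination _ _ _ hw₁] at this

end IsPositiveConvexCombination

theorem caratheodory_sharpened
    (d : ℕ) (R : Set (EuclideanSpace ℝ (Fin d)))
    (y : EuclideanSpace ℝ (Fin d))
    (hy : y ∈ intrinsicInterior ℝ (convexHull ℝ R))
    (x : EuclideanSpace ℝ (Fin d)) (hx : x ∈ R) :
    ∃ S : Finset (EuclideanSpace ℝ (Fin d)),
      (S : Set (EuclideanSpace ℝ (Fin d))) ⊆ R ∧ x ∈ S ∧ S.card ≤ d + 1 ∧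
      AffineIndependent ℝ (fun p : {z // z ∈ S} => (p : EuclideanSpace ℝ (Fin d))) ∧
      y ∈ intrinsicInterior ℝ (convexHull ℝ (S : Set (EuclideanSpace ℝ (Fin d)))) := by
  classical
  obtain ⟨z, hz, hyz⟩ := exists_mem_openSegment_of_mem_intrinsicInterior
    (subset_convexHull ℝ R hx) hy
  rw [convexHull_eq_union_convexHull_finite_subsets] at hz
  obtain ⟨T, hTR, hzT⟩ := mem_iUnion₂.mp hz
  obtain ⟨t, hts, hxt, ht⟩ := exists_isPositiveConvexCombination_of_mem_openSegment
    (mem_insert_self x T) (convexHull_mono (by simp [Set.subset_insert]) hzT) hyz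
  obtain ⟨S, hSt, hxS, hS, hSy⟩ := ht.exists_affineIndependent_subset hxt
  refine ⟨S, ?_, hxS, ?_, hS, hSy.mem_intrinsicInterior_convexHull hS⟩
  · intro u hu
    rcases mem_insert.mp (hts (hSt hu)) with rfl | huT
    exacts [hx, hTR huT]
  · have hspan := Submodule.finrank_le (vectorSpan ℝ (range ((↑) : S → EuclideanSpace ℝ (Fin d))))
    rw [finrank_euclideanSpace_fin] at hspan
    simpa using hS.card_le_finrank_succ.trans (Nat.add_le_add_right hspan 1)
end

section
/- If S is a finite M-set in a finite-dimensional normed space, then no point of S lies in the convex hull of the remaining points; i.e., S is the vertex set of the polytope conv(S). -/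
/-! A point `x` of an M-set `S` satisfies `‖x + y‖ = 2` for every other point `y`, so the rest of
`S` lies in the closed ball of radius `2` about `-x`. That ball is convex, so if `x` were in the
convex hull of the rest it would lie in the ball too, giving `2 * ‖x‖ = ‖x + x‖ ≤ 2`, against
`‖x‖ > 1`. -/

lemma norm_add_le_of_mem_convexHull {E : Type*} [SeminormedAddCommGroup E] [NormedSpace ℝ E]
    {s : Set E} {x y : E} {r : ℝ} (hs : ∀ z ∈ s, ‖x + z‖ ≤ r) (hy : y ∈ convexHull ℝ s) :
    ‖x + y‖ ≤ r := by
  have hball : s ⊆ Metric.closedBall (-x) r := fun z hz => by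
    simpa [dist_eq_norm, add_comm] using hs z hz
  simpa [dist_eq_norm, add_comm] using convexHull_min hball (convex_closedBall _ _) hy

theorem mset_convex_position_general
    (X : Type*) [NormedAddCommGroup X] [NormedSpace ℝ X]
    (S : Finset X)
    (hnorm : ∀ x ∈ S, 1 < ‖x‖)
    (hmid : ∀ x ∈ S, ∀ y ∈ S, x ≠ y → ‖x + y‖ = 2) :
    ∀ x ∈ S, x ∉ convexHull ℝ ((S : Set X) \ {x}) := by
  intro x hx hhull
  have hrest : ∀ y ∈ (S : Set X) \ {x}, ‖x + y‖ ≤ 2 := fun y ⟨hyS, hyx⟩ =>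
    (hmid x hx y hyS (Ne.symm hyx)).le
  have hdouble : ‖x + x‖ = 2 * ‖x‖ := by
    rw [← two_smul ℝ x, norm_smul, Real.norm_two]
  linarith [norm_add_le_of_mem_convexHull hrest hhull, hnorm x hx]

theorem mset_convex_position
    (X : Type*) [NormedAddCommGroup X] [NormedSpace ℝ X] [FiniteDimensional ℝ X]
    (S : Finset X)
    (hnorm : ∀ x ∈ S, 1 < ‖x‖)
    (hmid : ∀ x ∈ S, ∀ y ∈ S, x ≠ y → ‖x + y‖ = 2) :
    ∀ x ∈ S, x ∉ convexHull ℝ ((S : Set X) \ {x}) :=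
  mset_convex_position_general X S hnorm hmid
end

section
/- In any two-dimensional normed space there exist unit vectors x, y, z with x + y + z = 0; consequently {2x, 2y, 2z} is an M-set of size 3. -/
/-!
The unit sphere of a real normed space of dimension at least two is connected, and on it the
continuous function `y ↦ ‖x + y‖` takes the value `2` at `x` and `0` at `-x`; so some unit `y`
has `‖x + y‖ = 1`, and `z = -(x + y)` completes the triple. For unit vectors summing to zero,
`2x + 2y = -2z` has norm `2`, while `‖2x‖ = 2 ≠ 1 = ‖x + y‖` keeps `2x, 2y, 2z` distinct.
-/

def IsMSet (X : Type*) [NormedAddCommGroup X] (S : Set X) : Prop :=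
  (∀ x ∈ S, 1 < ‖x‖) ∧ ∀ x ∈ S, ∀ y ∈ S, x ≠ y → ‖x + y‖ = 2

open Metric

section

variable {E : Type*} [NormedAddCommGroup E] [NormedSpace ℝ E]

theorem exists_norm_add_eq_one_of_one_lt_rank (h : 1 < Module.rank ℝ E) {x : E}
    (hx : ‖x‖ = 1) : ∃ y : E, ‖y‖ = 1 ∧ ‖x + y‖ = 1 := by
  have hxs : x ∈ sphere (0 : E) 1 := by simpa using hx
  have hnegx : -x ∈ sphere (0 : E) 1 := by simpa using hx
  have hcont : ContinuousOn (fun y : E => ‖x + y‖) (sphere 0 1) := by fun_prop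
  have hx2 : ‖x + x‖ = 2 := by rw [← two_smul ℝ x, norm_smul, hx]; norm_num
  obtain ⟨y, hy, hxy⟩ := (isPreconnected_sphere h 0 1).intermediate_value hnegx hxs hcont
    (show (1 : ℝ) ∈ Set.Icc ‖x + -x‖ ‖x + x‖ by rw [hx2]; norm_num)
  exact ⟨y, by simpa using hy, hxy⟩

theorem exists_unit_vectors_add_add_eq_zero (h : 1 < Module.rank ℝ E) :
    ∃ x y z : E, ‖x‖ = 1 ∧ ‖y‖ = 1 ∧ ‖z‖ = 1 ∧ x + y + z = 0 := by
  have : Nontrivial E := rank_pos_iff_nontrivial.mp (zero_lt_one.trans h)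
  obtain ⟨x, hx⟩ := exists_norm_eq E zero_le_one
  obtain ⟨y, hy, hxy⟩ := exists_norm_add_eq_one_of_one_lt_rank h hx
  exact ⟨x, y, -(x + y), hx, hy, by rwa [norm_neg], by abel⟩

theorem norm_two_smul_of_norm_eq_one {x : E} (hx : ‖x‖ = 1) : ‖(2 : ℝ) • x‖ = 2 := by
  rw [norm_smul, hx]; norm_num

theorem norm_two_smul_add_two_smul_of_add_add_eq_zero {x y z : E} (hz : ‖z‖ = 1)
    (hsum : x + y + z = 0) : ‖(2 : ℝ) • x + (2 : ℝ) • y‖ = 2 := by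
  rw [← smul_add, eq_neg_of_add_eq_zero_left hsum, smul_neg, norm_neg]
  exact norm_two_smul_of_norm_eq_one hz

theorem ne_of_add_add_eq_zero {x y z : E} (hx : ‖x‖ = 1) (hz : ‖z‖ = 1)
    (hsum : x + y + z = 0) : x ≠ y := by
  rintro rfl
  have h2 : ‖x + x‖ = 2 := by rw [← two_smul ℝ x]; exact norm_two_smul_of_norm_eq_one hx
  rw [eq_neg_of_add_eq_zero_left hsum, norm_neg, hz] at h2
  norm_num at h2

theorem isMSet_two_smul_of_add_add_eq_zero {x y z : E} (hx : ‖x‖ = 1) (hy : ‖y‖ = 1)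
    (hz : ‖z‖ = 1) (hsum : x + y + z = 0) :
    IsMSet E {(2 : ℝ) • x, (2 : ℝ) • y, (2 : ℝ) • z} := by
  refine ⟨?_, ?_⟩
  · rintro w (rfl | rfl | rfl) <;> rw [norm_two_smul_of_norm_eq_one ‹_›] <;> norm_num
  · have hxzy : x + z + y = 0 := by rw [← hsum]; abel
    have hyzx : y + z + x = 0 := by rw [← hsum]; abel
    have hxy := norm_two_smul_add_two_smul_of_add_add_eq_zero hz hsum
    have hxz := norm_two_smul_add_two_smul_of_add_add_eq_zero hy hxzy
    have hyz := norm_two_smul_add_two_smul_of_add_add_eq_zero hx hyzx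
    rintro u (rfl | rfl | rfl) w (rfl | rfl | rfl) huw <;>
      first | exact absurd rfl huw | assumption | rwa [add_comm]

theorem ncard_two_smul_of_add_add_eq_zero {x y z : E} (hx : ‖x‖ = 1) (hy : ‖y‖ = 1)
    (hz : ‖z‖ = 1) (hsum : x + y + z = 0) :
    ({(2 : ℝ) • x, (2 : ℝ) • y, (2 : ℝ) • z} : Set E).ncard = 3 := by
  have hinj := smul_right_injective E (two_ne_zero (α := ℝ))
  have hxy := ne_of_add_add_eq_zero hx hz hsum
  have hxz := ne_of_add_add_eq_zero hx hy (by rw [← hsum]; abel : x + z + y = 0)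
  have hyz := ne_of_add_add_eq_zero hy hx (by rw [← hsum]; abel : y + z + x = 0)
  exact Set.ncard_eq_three.mpr ⟨_, _, _, hinj.ne hxy, hinj.ne hxz, hinj.ne hyz, rfl⟩

end

theorem unit_vectors_sum_zero_two_dim
    (X : Type*) [NormedAddCommGroup X] [NormedSpace ℝ X]
    (hdim : Module.finrank ℝ X = 2) :
    ∃ x y z : X, ‖x‖ = 1 ∧ ‖y‖ = 1 ∧ ‖z‖ = 1 ∧ x + y + z = 0 ∧
      IsMSet X {(2 : ℝ) • x, (2 : ℝ) • y, (2 : ℝ) • z} ∧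
      ({(2 : ℝ) • x, (2 : ℝ) • y, (2 : ℝ) • z} : Set X).ncard = 3 := by
  obtain ⟨x, y, z, hx, hy, hz, hsum⟩ :=
    exists_unit_vectors_add_add_eq_zero (E := X) (Module.one_lt_rank_of_one_lt_finrank (by omega))
  exact ⟨x, y, z, hx, hy, hz, hsum, isMSet_two_smul_of_add_add_eq_zero hx hy hz hsum,
    ncard_two_smul_of_add_add_eq_zero hx hy hz hsum⟩
end

section
/- Every normed space of dimension at least 3 admits an M-set of cardinality 4, i.e., m(X) ≥ 4. -/
open Function Module Set

section

variable {E X : Type*} [NormedAddCommGroup X]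

theorem isMSet_range_of_pairwise_norm_add_eq_two {ι : Type*} {a : ι → X}
    (ha : ∀ i, 1 < ‖a i‖) (hsum : Pairwise fun i j => ‖a i + a j‖ = 2) : IsMSet X (range a) := by
  refine ⟨forall_mem_range.2 ha, ?_⟩
  rintro _ ⟨i, rfl⟩ _ ⟨j, rfl⟩ hne
  exact hsum fun h => hne (h ▸ rfl)

variable [NormedSpace ℝ X]

theorem injective_of_pairwise_norm_add_eq_two {ι : Type*} {a : ι → X} (ha : ∀ i, 1 < ‖a i‖)
    (hsum : Pairwise fun i j => ‖a i + a j‖ = 2) : Injective a := by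
  intro i j hij
  by_contra hne
  have h : ‖a i + a j‖ = 2 := hsum hne
  rw [← hij, ← two_smul ℝ, norm_smul, Real.norm_two] at h
  linarith [ha i]

theorem exists_isMSet_ncard_four {x y z : X} (hx : ‖x‖ = 1) (hy : ‖y‖ = 1) (hz : ‖z‖ = 1)
    (h₁ : 1 < ‖x + y + z‖) (h₂ : 1 < ‖x - y - z‖) (h₃ : 1 < ‖-x + y - z‖)
    (h₄ : 1 < ‖-x - y + z‖) : ∃ S : Set X, IsMSet X S ∧ S.ncard = 4 := by
  set a : Fin 4 → X := ![x + y + z, x - y - z, -x + y - z, -x - y + z]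
  have ha : ∀ i, 1 < ‖a i‖ := by
    intro i; fin_cases i <;> assumption
  have hsum : Pairwise fun i j => ‖a i + a j‖ = 2 := by
    intro i j hij
    fin_cases i <;> fin_cases j <;> simp [a] at hij ⊢ <;> abel_nf <;>
      simp [norm_zsmul ℝ, hx, hy, hz]
  refine ⟨range a, isMSet_range_of_pairwise_norm_add_eq_two ha hsum, ?_⟩
  rw [ncard_range_of_injective (injective_of_pairwise_norm_add_eq_two ha hsum), Nat.card_fin]

section Module

variable {V : Type*} [AddCommGroup V] [Module ℝ V]

theorem LinearMap.norm_map_inv_norm_smul (T : V →ₗ[ℝ] X) {u : V} (hu : T u ≠ 0) :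
    ‖T (‖T u‖⁻¹ • u)‖ = 1 := by
  rw [map_smul]; exact norm_smul_inv_norm hu

theorem exists_norm_map_eq_one_add_ne_zero_sub_ne_zero (hV : 2 ≤ finrank ℝ V)
    {T : V →ₗ[ℝ] X} (hT : Injective T) :
    ∃ p q : V, ‖T p‖ = 1 ∧ ‖T q‖ = 1 ∧ p + q ≠ 0 ∧ p - q ≠ 0 := by
  obtain ⟨f, hf⟩ := exists_linearIndependent_of_le_finrank hV
  have hTf : ∀ i, T (f i) ≠ 0 := fun i => (map_ne_zero_iff T hT).2 (hf.ne_zero i)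
  have hpq : ∀ s : ℝ, s ≠ 0 → ‖T (f 0)‖⁻¹ • f 0 + s • ‖T (f 1)‖⁻¹ • f 1 ≠ 0 := by
    intro s hs h
    have := Fintype.linearIndependent_iff.1 hf ![‖T (f 0)‖⁻¹, s * ‖T (f 1)‖⁻¹]
      (by simpa [Fin.sum_univ_two, mul_smul] using h) 0
    simp [hTf] at this
  refine ⟨_, _, T.norm_map_inv_norm_smul (hTf 0), T.norm_map_inv_norm_smul (hTf 1), ?_, ?_⟩
  · simpa using hpq 1 one_ne_zero
  · simpa [sub_eq_add_neg] using hpq (-1) (by norm_num)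

end Module

section Normed

variable [NormedAddCommGroup E] [NormedSpace ℝ E]

theorem LinearMap.exists_norm_map_eq_one_forall_norm_le [FiniteDimensional ℝ E] [Nontrivial E]
    {T : E →ₗ[ℝ] X} (hT : Injective T) : ∃ r, ‖T r‖ = 1 ∧ ∀ v, ‖T v‖ ≤ 1 → ‖v‖ ≤ ‖r‖ := by
  have hT0 : ∀ {v}, v ≠ 0 → T v ≠ 0 := fun hv => (map_ne_zero_iff T hT).2 hv
  obtain ⟨K, -, hK⟩ := T.injective_iff_antilipschitz.mp hT
  have hcompact : IsCompact {v | ‖T v‖ ≤ 1} := by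
    refine Metric.isCompact_of_isClosed_isBounded
      (isClosed_le T.continuous_of_finiteDimensional.norm continuous_const) ?_
    convert hK.isBounded_preimage (Metric.isBounded_closedBall (x := (0 : X)) (r := 1)) using 1
    ext; simp
  obtain ⟨r, hr, hmax⟩ := hcompact.exists_isMaxOn ⟨0, by simp⟩ continuous_norm.continuousOn
  have hmax : ∀ v, ‖T v‖ ≤ 1 → ‖v‖ ≤ ‖r‖ := fun v hv => hmax hv
  obtain ⟨u, hu⟩ := exists_ne (0 : E)
  have hr0 : r ≠ 0 := by
    rintro rfl
    have := hmax _ (T.norm_map_inv_norm_smul (hT0 hu)).le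
    rw [norm_smul, norm_inv, norm_norm, norm_zero] at this
    exact this.not_gt (mul_pos (inv_pos.2 (norm_pos_iff.2 (hT0 hu))) (norm_pos_iff.2 hu))
  refine ⟨r, le_antisymm hr ?_, hmax⟩
  have := hmax _ (T.norm_map_inv_norm_smul (hT0 hr0)).le
  rw [norm_smul, norm_inv, norm_norm] at this
  exact (inv_le_one₀ (norm_pos_iff.2 (hT0 hr0))).1
    ((mul_le_iff_le_one_left (norm_pos_iff.2 hr0)).1 this)

end Normed

section InnerProduct

variable [NormedAddCommGroup E] [InnerProductSpace ℝ E]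

theorem one_lt_norm_map_add_of_inner_eq_zero {T : E →ₗ[ℝ] X} {r w : E}
    (hr : ∀ v, ‖T v‖ ≤ 1 → ‖v‖ ≤ ‖r‖) (hw : inner ℝ r w = 0) (hw0 : w ≠ 0) :
    1 < ‖T (r + w)‖ := by
  by_contra! h
  have hle := hr _ h
  have hpyth := norm_add_sq_eq_norm_sq_add_norm_sq_real hw
  have hpos := norm_pos_iff.2 hw0
  nlinarith [norm_nonneg (r + w), norm_nonneg r]

theorem exists_isMSet_ncard_four_of_injective [FiniteDimensional ℝ E] (hE : 3 ≤ finrank ℝ E)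
    {T : E →ₗ[ℝ] X} (hT : Injective T) : ∃ S : Set X, IsMSet X S ∧ S.ncard = 4 := by
  have : Nontrivial E := nontrivial_of_finrank_pos (R := ℝ) (by omega)
  obtain ⟨r, hr1, hr⟩ := T.exists_norm_map_eq_one_forall_norm_le hT
  have hr0 : r ≠ 0 := by rintro rfl; simp at hr1
  have hW : 2 ≤ finrank ℝ (ℝ ∙ r)ᗮ := by
    have := (ℝ ∙ r).finrank_add_finrank_orthogonal
    rw [finrank_span_singleton hr0] at this
    omega
  set T' := T ∘ₗ (ℝ ∙ r)ᗮ.subtype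
  have key : ∀ w, w ≠ 0 → 1 < ‖T r + T' w‖ := fun w hw0 => by
    have := one_lt_norm_map_add_of_inner_eq_zero hr
      (Submodule.mem_orthogonal_singleton_iff_inner_right.1 w.2) (by simpa using hw0)
    rwa [map_add] at this
  obtain ⟨p, q, hp, hq, hadd, hsub⟩ :=
    exists_norm_map_eq_one_add_ne_zero_sub_ne_zero (T := T') hW (hT.comp Subtype.val_injective)
  refine exists_isMSet_ncard_four hp hq hr1 ?_ ?_ ?_ ?_
  · rw [show T' p + T' q + T r = T r + T' (p + q) by rw [map_add]; abel]
    exact key _ hadd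
  · rw [show T' p - T' q - T r = -(T r + T' (q - p)) by rw [map_sub]; abel, norm_neg]
    exact key _ (sub_ne_zero.2 (sub_ne_zero.1 hsub).symm)
  · rw [show -T' p + T' q - T r = -(T r + T' (p - q)) by rw [map_sub]; abel, norm_neg]
    exact key _ hsub
  · rw [show -T' p - T' q + T r = T r + T' (-(p + q)) by rw [map_neg, map_add]; abel]
    exact key _ (neg_ne_zero.2 hadd)

end InnerProduct

end

theorem mset_four_points_dim_ge_three
    (X : Type*) [NormedAddCommGroup X] [NormedSpace ℝ X]
    (hdim : 3 ≤ Module.rank ℝ X) :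
    ∃ S : Set X, IsMSet X S ∧ S.ncard = 4 := by
  obtain ⟨f, hf⟩ := exists_linearIndependent_of_le_rank (n := 3) (by exact_mod_cast hdim)
  let e := EuclideanSpace.equiv (Fin 3) ℝ
  have hT : Injective (Fintype.linearCombination ℝ f ∘ₗ e.toLinearMap) :=
    (linearIndependent_iff_injective_fintypeLinearCombination.1 hf).comp e.injective
  exact exists_isMSet_ncard_four_of_injective (by simp) hT
end

section
/- Let x_1, ..., x_m be distinct vectors in Euclidean space ℝ^d (d ≠ 2) with ‖x_i + x_j‖ = 1 for all i ≠ j. Then m ≤ d+1. -/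
/-!
Write `aᵢ = ‖vᵢ‖²`. The hypothesis fixes the Gram matrix off the diagonal:
`⟪vᵢ, vⱼ⟫ = (1 - aᵢ - aⱼ) / 2`. Pairing an affine dependence `∑ cᵢ vᵢ = 0`, `∑ cᵢ = 0` with each
`vₖ` gives `(4aₖ - 1) cₖ = Γ := ∑ cᵢ aᵢ`; summing over `k` gives `4Γ = nΓ` for `n` points, so
`Γ = 0` unless `n = 4`. Then every point carrying a nonzero weight has `aₖ = 1/4`, and two such
points would be at distance `0`. A single nonzero weight contradicts `∑ cᵢ = 0`, so any `n ≠ 4`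
such points are affinely independent; for `d ≠ 2` this applies to `d + 2` points of `ℝ^d`.
-/

open Finset RealInnerProductSpace

section UnitMidpoints

variable {E : Type*} [NormedAddCommGroup E] [InnerProductSpace ℝ E]

lemma real_inner_eq_of_norm_add_eq_one {u w : E} (h : ‖u + w‖ = 1) :
    ⟪u, w⟫ = (1 - ‖u‖ ^ 2 - ‖w‖ ^ 2) / 2 := by
  have := norm_add_sq_real u w
  rw [h] at this
  linarith

variable {ι : Type*} [Fintype ι] {v : ι → E} {c : ι → ℝ}

lemma mul_weight_eq_sum_of_norm_add_eq_one (hv : ∀ i j, i ≠ j → ‖v i + v j‖ = 1)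
    (hc : ∑ i, c i = 0) (hcv : ∑ i, c i • v i = 0) (k : ι) :
    (4 * ‖v k‖ ^ 2 - 1) * c k = ∑ i, c i * ‖v i‖ ^ 2 := by
  have hpair : ∑ i, c i * ⟪v k, v i⟫ = 0 := by
    simp only [← real_inner_smul_right, ← inner_sum, hcv, inner_zero_right]
  have hdiag : ∑ i, (c i * ⟪v k, v i⟫ - c i * (1 - ‖v k‖ ^ 2 - ‖v i‖ ^ 2) / 2)
      = (4 * ‖v k‖ ^ 2 - 1) * c k / 2 := by
    rw [Fintype.sum_eq_single k fun i hi => by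
      rw [real_inner_eq_of_norm_add_eq_one (hv k i (Ne.symm hi))]; ring]
    rw [real_inner_self_eq_norm_sq]
    ring
  have hoff : ∑ i, c i * (1 - ‖v k‖ ^ 2 - ‖v i‖ ^ 2) / 2
      = (1 - ‖v k‖ ^ 2) / 2 * ∑ i, c i - (∑ i, c i * ‖v i‖ ^ 2) / 2 := by
    rw [mul_sum, sum_div, ← sum_sub_distrib]
    exact sum_congr rfl fun i _ => by ring
  rw [sum_sub_distrib, hpair, hoff, hc] at hdiag
  linarith

lemma sum_mul_norm_sq_eq_zero_of_norm_add_eq_one (hcard : Fintype.card ι ≠ 4)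
    (hv : ∀ i j, i ≠ j → ‖v i + v j‖ = 1) (hc : ∑ i, c i = 0) (hcv : ∑ i, c i • v i = 0) :
    ∑ i, c i * ‖v i‖ ^ 2 = 0 := by
  have hsum := sum_congr rfl fun k (_ : k ∈ univ) =>
    mul_weight_eq_sum_of_norm_add_eq_one hv hc hcv k
  have hlhs : ∑ k, (4 * ‖v k‖ ^ 2 - 1) * c k = 4 * ∑ k, c k * ‖v k‖ ^ 2 - ∑ k, c k := by
    rw [mul_sum, ← sum_sub_distrib]
    exact sum_congr rfl fun k _ => by ring
  rw [hlhs, hc, sum_const, card_univ, nsmul_eq_mul] at hsum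
  have hfactor : ((Fintype.card ι : ℝ) - 4) * ∑ i, c i * ‖v i‖ ^ 2 = 0 := by linarith
  exact (mul_eq_zero.mp hfactor).resolve_left (sub_ne_zero.mpr (by exact_mod_cast hcard))

lemma affineIndependent_of_norm_add_eq_one (hinj : Function.Injective v)
    (hcard : Fintype.card ι ≠ 4) (hv : ∀ i j, i ≠ j → ‖v i + v j‖ = 1) :
    AffineIndependent ℝ v := by
  rw [affineIndependent_iff_of_fintype]
  intro c hc hcv
  rw [weightedVSub_eq_linear_combination _ hc] at hcv
  have hΓ := sum_mul_norm_sq_eq_zero_of_norm_add_eq_one hcard hv hc hcv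
  have hquarter : ∀ k, c k ≠ 0 → ‖v k‖ ^ 2 = 1 / 4 := fun k hk => by
    have := mul_weight_eq_sum_of_norm_add_eq_one hv hc hcv k
    rw [hΓ] at this
    linarith [(mul_eq_zero.mp this).resolve_right hk]
  have hsupport : ∀ p q, c p ≠ 0 → c q ≠ 0 → p = q := fun p q hp hq => by
    by_contra hpq
    refine hpq (hinj (sub_eq_zero.mp (norm_eq_zero.mp (pow_eq_zero_iff two_ne_zero |>.mp ?_))))
    rw [norm_sub_sq_real, real_inner_eq_of_norm_add_eq_one (hv p q hpq), hquarter p hp,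
      hquarter q hq]
    norm_num
  intro p
  by_contra hp
  rw [Fintype.sum_eq_single p fun q hqp => by_contra fun hq => hqp (hsupport q p hq hp)] at hc
  exact hp hc

end UnitMidpoints

theorem euclidean_midpoint_bound_general
    (d : ℕ) (hd2 : d ≠ 2)
    (m : ℕ) (x : Fin m → EuclideanSpace ℝ (Fin d))
    (hinj : Function.Injective x)
    (hmid : ∀ i j, i ≠ j → ‖x i + x j‖ = 1) :
    m ≤ d + 1 := by
  by_contra! hm
  have hle : d + 2 ≤ m := hm
  have hindep : AffineIndependent ℝ (x ∘ Fin.castLE hle) :=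
    affineIndependent_of_norm_add_eq_one (hinj.comp (Fin.castLE_injective hle))
      (by rw [Fintype.card_fin]; omega)
      fun i j hij => hmid _ _ ((Fin.castLE_injective hle).ne hij)
  have hcard := hindep.card_le_finrank_succ
  have hspan := Submodule.finrank_le (vectorSpan ℝ (Set.range (x ∘ Fin.castLE hle)))
  rw [Fintype.card_fin] at hcard
  rw [finrank_euclideanSpace_fin] at hspan
  omega

theorem euclidean_midpoint_bound
    (d : ℕ) (hd : 0 < d) (hd2 : d ≠ 2)
    (m : ℕ) (x : Fin m → EuclideanSpace ℝ (Fin d))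
    (hinj : Function.Injective x)
    (hmid : ∀ i j, i ≠ j → ‖x i + x j‖ = 1) :
    m ≤ d + 1 :=
  euclidean_midpoint_bound_general d hd2 m x hinj hmid
end

section
/- Let x_1, ..., x_m be distinct vectors in the Euclidean plane ℝ² with ‖x_i + x_j‖ = 1 for all i ≠ j. Then m ≤ 4, and this bound is attained (e.g., by three unit vectors at mutual angles 120° together with the origin, suitably scaled). -/
/-!
Since `‖x k - (-x i)‖ = ‖x i + x k‖ = 1`, every `x k` with `k ∉ {i, j}` lies on both unit circles
about `-x i` and `-x j`. These circles are distinct, and two distinct circles in a plane meet in at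
most two points. The bound is attained by the origin together with three unit vectors `u, v, w`
with `u + v + w = 0`, since then `u + v = -w`, and so on.
-/

open Module Function

theorem card_le_four_of_norm_add_eq {V ι : Type*} [NormedAddCommGroup V] [InnerProductSpace ℝ V]
    [FiniteDimensional ℝ V] [Fintype ι] (hd : finrank ℝ V = 2) {x : ι → V} (hx : Injective x)
    {r : ℝ} (h : ∀ i j, i ≠ j → ‖x i + x j‖ = r) : Fintype.card ι ≤ 4 := by
  by_contra! hcard
  obtain ⟨f⟩ : Nonempty (Fin 5 ↪ ι) :=
    Function.Embedding.nonempty_of_card_le (by simpa using hcard.nat_succ_le)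
  have hy : Injective (x ∘ f) := hx.comp f.injective
  have hdist (i j : Fin 5) (hij : i ≠ j) : dist (x (f i)) (-x (f j)) = r := by
    rw [dist_eq_norm, sub_neg_eq_add]
    exact h _ _ (f.injective.ne hij)
  have hcircles := EuclideanGeometry.eq_of_dist_eq_of_dist_eq_of_finrank_eq_two hd
    (neg_injective.ne (hy.ne (show (0 : Fin 5) ≠ 1 by decide)))
    (hy.ne (show (2 : Fin 5) ≠ 3 by decide))
    (hdist 2 0 (by decide)) (hdist 3 0 (by decide)) (hdist 4 0 (by decide))
    (hdist 2 1 (by decide)) (hdist 3 1 (by decide)) (hdist 4 1 (by decide))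
  rcases hcircles with h42 | h43
  · exact absurd (hy h42) (by decide)
  · exact absurd (hy h43) (by decide)

theorem injective_and_norm_add_eq_one_of_add_add_eq_zero {V : Type*} [NormedAddCommGroup V]
    [NormedSpace ℝ V] {u v w : V} (hu : ‖u‖ = 1) (hv : ‖v‖ = 1) (hw : ‖w‖ = 1)
    (hsum : u + v + w = 0) :
    Injective ![0, u, v, w] ∧ ∀ i j, i ≠ j → ‖![0, u, v, w] i + ![0, u, v, w] j‖ = 1 := by
  have huv : ‖u + v‖ = 1 := by rw [eq_neg_of_add_eq_zero_left hsum, norm_neg, hw]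
  have huw : ‖u + w‖ = 1 := by
    rw [eq_neg_of_add_eq_zero_left (show u + w + v = 0 by rw [← hsum]; abel), norm_neg, hv]
  have hvw : ‖v + w‖ = 1 := by
    rw [eq_neg_of_add_eq_zero_left (show v + w + u = 0 by rw [← hsum]; abel), norm_neg, hu]
  have zero_ne {a : V} (ha : ‖a‖ = 1) : (0 : V) ≠ a := by
    rintro rfl
    simp at ha
  have ne_of_norm_add {a b : V} (ha : ‖a‖ = 1) (hab : ‖a + b‖ = 1) : a ≠ b := by
    rintro rfl
    rw [← two_smul ℝ a, norm_smul, ha] at hab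
    norm_num at hab
  have := zero_ne hu; have := zero_ne hv; have := zero_ne hw
  have := ne_of_norm_add hu huv; have := ne_of_norm_add hu huw; have := ne_of_norm_add hv hvw
  constructor
  · intro i j hij
    fin_cases i <;> fin_cases j <;> simp_all [eq_comm]
  · intro i j hij
    fin_cases i <;> fin_cases j <;> simp_all [add_comm]

theorem euclidean_plane_midpoint_bound :
    (∀ (m : ℕ) (x : Fin m → EuclideanSpace ℝ (Fin 2)),
      Function.Injective x → (∀ i j, i ≠ j → ‖x i + x j‖ = 1) → m ≤ 4) ∧
    ∃ x : Fin 4 → EuclideanSpace ℝ (Fin 2),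
      Function.Injective x ∧ ∀ i j, i ≠ j → ‖x i + x j‖ = 1 := by
  constructor
  · intro m x hx h
    simpa using card_le_four_of_norm_add_eq finrank_euclideanSpace_fin hx h
  · obtain ⟨hinj, hnorm⟩ := injective_and_norm_add_eq_one_of_add_add_eq_zero
      (u := !₂[1, 0]) (v := !₂[-1/2, √3/2]) (w := !₂[-1/2, -(√3/2)])
      (by simp [EuclideanSpace.norm_eq]) (by simp [EuclideanSpace.norm_eq, div_pow]; norm_num)
      (by simp [EuclideanSpace.norm_eq, div_pow]; norm_num)
      (by ext i; fin_cases i <;> simp; norm_num)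
    exact ⟨_, hinj, hnorm⟩
end

section
/- For Euclidean d-space, the maximum cardinality of an M-set is d+1, i.e., m(ℓ_2^d) = d+1. -/
/-!
If `‖x + y‖ = 2` then `⟪x, y⟫ = 2 - (‖x‖² + ‖y‖²) / 2`, so for points `xᵢ` of an M-set and weights
with `∑ wᵢ = 0` the rank-one part of the Gram matrix drops out and
`‖∑ wᵢ xᵢ‖² = ∑ wᵢ² (2‖xᵢ‖² - 2)`, which vanishes only for `w = 0` since `‖xᵢ‖ > 1`. Hence an M-set
is affinely independent and has at most `d + 1` points.

Conversely, for an orthonormal basis `e₁, …, e_d` the points `√2 eᵢ` and `-√2 a (e₁ + ⋯ + e_d)`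
form an M-set as soon as `d a² = 2a + 1` and `a ≥ 0`.
-/

open Finset RealInnerProductSpace Module

section NormedSpace

variable {X : Type*} [NormedAddCommGroup X] {ι : Type*} {p : ι → X}

theorem isMSet_range (h1 : ∀ i, 1 < ‖p i‖) (h2 : ∀ i j, i ≠ j → ‖p i + p j‖ = 2) :
    IsMSet X (Set.range p) := by
  refine ⟨Set.forall_mem_range.2 h1, ?_⟩
  rintro _ ⟨i, rfl⟩ _ ⟨j, rfl⟩ hij
  exact h2 i j (ne_of_apply_ne p hij)

variable [NormedSpace ℝ X]

theorem injective_of_norm_add_eq_two (h1 : ∀ i, 1 < ‖p i‖)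
    (h2 : ∀ i j, i ≠ j → ‖p i + p j‖ = 2) : Function.Injective p := by
  intro i j hij
  by_contra hne
  have h := h2 i j hne
  rw [← hij, ← two_smul ℝ, norm_smul, Real.norm_two] at h
  linarith [h1 i]

theorem one_lt_norm_sqrt_two_smul {x : X} (h : 1 < 2 * ‖x‖ ^ 2) : 1 < ‖√2 • x‖ := by
  rw [norm_smul, Real.norm_of_nonneg (Real.sqrt_nonneg 2)]
  refine lt_of_pow_lt_pow_left₀ 2 (by positivity) ?_
  rwa [one_pow, mul_pow, Real.sq_sqrt zero_le_two]

theorem norm_sqrt_two_smul_eq_two {x : X} (h : ‖x‖ ^ 2 = 2) : ‖√2 • x‖ = 2 := by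
  rw [norm_smul, Real.norm_of_nonneg (Real.sqrt_nonneg 2), ← Real.sqrt_sq (norm_nonneg x), h,
    Real.mul_self_sqrt zero_le_two]

end NormedSpace

section InnerProductSpace

variable {E : Type*} [NormedAddCommGroup E] [InnerProductSpace ℝ E] {ι : Type*} {p : ι → E}

theorem inner_eq_of_norm_add_eq_two {x y : E} (h : ‖x + y‖ = 2) :
    ⟪x, y⟫ = 2 - (‖x‖ ^ 2 + ‖y‖ ^ 2) / 2 := by
  have := norm_add_sq_real x y
  rw [h] at this
  linarith

theorem norm_sum_smul_sq_of_norm_add_eq_two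
    (h2 : ∀ i j, i ≠ j → ‖p i + p j‖ = 2) {s : Finset ι} {w : ι → ℝ}
    (hw : ∑ i ∈ s, w i = 0) :
    ‖∑ i ∈ s, w i • p i‖ ^ 2 = ∑ i ∈ s, w i ^ 2 * (2 * ‖p i‖ ^ 2 - 2) := by
  classical
  set c : ι → ℝ := fun i => ‖p i‖ ^ 2
  have hgram : ∀ i j, ⟪p i, p j⟫ = 2 - (c i + c j) / 2 + if i = j then 2 * c i - 2 else 0 := by
    intro i j
    by_cases hij : i = j
    · subst hij
      rw [if_pos rfl, real_inner_self_eq_norm_sq]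
      ring
    · rw [if_neg hij, inner_eq_of_norm_add_eq_two (h2 i j hij), add_zero]
  have hrow : ∀ i ∈ s,
      ⟪p i, ∑ j ∈ s, w j • p j⟫ = w i * (2 * c i - 2) - (∑ j ∈ s, w j * c j) / 2 := by
    intro i hi
    have : ∀ j, w j * ⟪p i, p j⟫
        = (2 - c i / 2) * w j - w j * c j / 2 + if i = j then w i * (2 * c i - 2) else 0 := by
      intro j
      rw [hgram]
      split_ifs with hij <;> [subst hij; skip] <;> ring
    simp_rw [inner_sum, real_inner_smul_right, this, sum_add_distrib, sum_sub_distrib,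
      ← mul_sum, ← sum_div, hw, sum_ite_eq, if_pos hi]
    ring
  calc ‖∑ i ∈ s, w i • p i‖ ^ 2
      = ∑ i ∈ s, w i * ⟪p i, ∑ j ∈ s, w j • p j⟫ := by
        rw [← real_inner_self_eq_norm_sq, sum_inner]
        simp_rw [real_inner_smul_left]
    _ = ∑ i ∈ s, w i ^ 2 * (2 * c i - 2) - (∑ j ∈ s, w j * c j) / 2 * ∑ i ∈ s, w i := by
        rw [sum_congr rfl fun i hi => by rw [hrow i hi], mul_sum, ← sum_sub_distrib]
        exact sum_congr rfl fun i _ => by ring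
    _ = ∑ i ∈ s, w i ^ 2 * (2 * ‖p i‖ ^ 2 - 2) := by rw [hw, mul_zero, sub_zero]

theorem affineIndependent_of_norm_add_eq_two (h1 : ∀ i, 1 < ‖p i‖)
    (h2 : ∀ i j, i ≠ j → ‖p i + p j‖ = 2) : AffineIndependent ℝ p := by
  classical
  rw [affineIndependent_iff]
  intro s w hw hsum i hi
  have hpos : ∀ i, 0 < 2 * ‖p i‖ ^ 2 - 2 := fun i => by nlinarith [h1 i]
  have hzero := norm_sum_smul_sq_of_norm_add_eq_two h2 hw
  rw [hsum, norm_zero, zero_pow two_ne_zero, eq_comm,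
    sum_eq_zero_iff_of_nonneg fun i _ => by positivity [hpos i]] at hzero
  simpa [(hpos i).ne'] using hzero i hi

variable {S : Set E}

theorem IsMSet.affineIndependent (hS : IsMSet E S) : AffineIndependent ℝ ((↑) : S → E) :=
  affineIndependent_of_norm_add_eq_two (fun x => hS.1 x x.2)
    fun x y hxy => hS.2 x x.2 y y.2 (Subtype.coe_ne_coe.2 hxy)

theorem IsMSet.finite [FiniteDimensional ℝ E] (hS : IsMSet E S) : S.Finite :=
  finite_set_of_fin_dim_affineIndependent ℝ hS.affineIndependent

theorem IsMSet.ncard_le_finrank_add_one [FiniteDimensional ℝ E] (hS : IsMSet E S) :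
    S.ncard ≤ finrank ℝ E + 1 := by
  have := hS.finite.fintype
  rw [Set.ncard_eq_toFinset_card', Set.toFinset_card]
  exact hS.affineIndependent.card_le_finrank_succ.trans (by gcongr; exact Submodule.finrank_le _)

noncomputable def apexCoeff (n : ℕ) : ℝ := (1 + √(n + 1)) / n

theorem apexCoeff_nonneg (n : ℕ) : 0 ≤ apexCoeff n := by
  unfold apexCoeff
  positivity

theorem natCast_mul_apexCoeff_sq {n : ℕ} (hn : n ≠ 0) :
    n * apexCoeff n ^ 2 = 2 * apexCoeff n + 1 := by
  have hsq : √(n + 1 : ℝ) ^ 2 = n + 1 := Real.sq_sqrt (by positivity)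
  unfold apexCoeff
  field_simp
  linear_combination hsq

theorem Orthonormal.norm_add_sq_of_ne {e : ι → E} (he : Orthonormal ℝ e) {i j : ι} (hij : i ≠ j) :
    ‖e i + e j‖ ^ 2 = 2 := by
  rw [norm_add_sq_real, he.1 i, he.1 j, he.2 hij]
  norm_num

variable [Fintype ι] {e : ι → E}

noncomputable def apex (e : ι → E) : E := ∑ k, (-apexCoeff (Fintype.card ι)) • e k

theorem Orthonormal.norm_apex_sq (he : Orthonormal ℝ e) :
    ‖apex e‖ ^ 2 = Fintype.card ι * apexCoeff (Fintype.card ι) ^ 2 := by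
  rw [← real_inner_self_eq_norm_sq, apex, he.inner_sum]
  simp [sq]

theorem Orthonormal.norm_add_apex_sq [Nonempty ι] (he : Orthonormal ℝ e) (i : ι) :
    ‖e i + apex e‖ ^ 2 = 2 := by
  rw [norm_add_sq_real, he.1 i, apex, he.inner_right_fintype, ← apex, he.norm_apex_sq,
    natCast_mul_apexCoeff_sq Fintype.card_ne_zero]
  ring

theorem Orthonormal.exists_isMSet_ncard_eq [Nonempty ι] (he : Orthonormal ℝ e) :
    ∃ S : Set E, IsMSet E S ∧ S.ncard = Fintype.card ι + 1 := by
  let p : Option ι → E := fun o => √2 • o.elim (apex e) e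
  have h1 : ∀ o, 1 < ‖p o‖ := by
    rintro (_ | i) <;> refine one_lt_norm_sqrt_two_smul ?_
    · rw [Option.elim_none, he.norm_apex_sq, natCast_mul_apexCoeff_sq Fintype.card_ne_zero]
      linarith [apexCoeff_nonneg (Fintype.card ι)]
    · rw [Option.elim_some, he.1 i]
      norm_num
  have h2 : ∀ o o', o ≠ o' → ‖p o + p o'‖ = 2 := by
    rintro (_ | i) (_ | j) hne <;> rw [← smul_add] <;> refine norm_sqrt_two_smul_eq_two ?_
    · exact absurd rfl hne
    · rw [Option.elim_none, Option.elim_some, add_comm]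
      exact he.norm_add_apex_sq j
    · exact he.norm_add_apex_sq i
    · exact he.norm_add_sq_of_ne (Option.some_injective _ |>.ne_iff.1 hne)
  refine ⟨Set.range p, isMSet_range h1 h2, ?_⟩
  rw [Set.ncard_range_of_injective (injective_of_norm_add_eq_two h1 h2), Nat.card_eq_fintype_card,
    Fintype.card_option]

theorem exists_isMSet_ncard_eq_finrank_add_one [FiniteDimensional ℝ E] (h : 0 < finrank ℝ E) :
    ∃ S : Set E, IsMSet E S ∧ S.ncard = finrank ℝ E + 1 := by
  have : Nonempty (Fin (finrank ℝ E)) := Fin.pos_iff_nonempty.1 h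
  simpa using (stdOrthonormalBasis ℝ E).orthonormal.exists_isMSet_ncard_eq

end InnerProductSpace

theorem mset_euclidean (d : ℕ) (hd : 1 ≤ d) :
    (∀ S : Set (EuclideanSpace ℝ (Fin d)),
      IsMSet (EuclideanSpace ℝ (Fin d)) S → S.Finite ∧ S.ncard ≤ d + 1) ∧
    ∃ S : Set (EuclideanSpace ℝ (Fin d)),
      IsMSet (EuclideanSpace ℝ (Fin d)) S ∧ S.ncard = d + 1 := by
  refine ⟨fun S hS => ⟨hS.finite, ?_⟩, ?_⟩
  · simpa using hS.ncard_le_finrank_add_one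
  · simpa using exists_isMSet_ncard_eq_finrank_add_one (E := EuclideanSpace ℝ (Fin d)) (by simpa)
end

section
/- In ℝ^d with the sup norm (d ≥ 2), any M-set has cardinality at most 2d−1. -/
/-!
Every point of an M-set lies beyond one of the `2d` facets `x i = ±1` of the unit cube, and two
distinct points cannot lie beyond the same facet, since the norm of their sum is only `2`;
hence at most `2d` points. If every facet were used, each point would lie beyond exactly one
facet. For the points `a` and `b` beyond `x i = 1` and `x i = -1`, the norm of `a + b` is then
attained in coordinate `i`, which forces `a i > 3` (or `b i < -3`) and leaves room for no third
point, whereas the facets of the other `d - 1 ≥ 1` directions need further points.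
-/

open Function

variable {ι : Type*}

/-- `1 < signedCoord p x` says that `x` lies beyond the facet `p` of the unit cube,
whose `2 * card ι` facets are indexed by `ι × Bool`. -/
def signedCoord (p : ι × Bool) (x : ι → ℝ) : ℝ :=
  if p.2 then x p.1 else -x p.1

lemma signedCoord_add (p : ι × Bool) (x y : ι → ℝ) :
    signedCoord p (x + y) = signedCoord p x + signedCoord p y := by
  unfold signedCoord
  split_ifs <;> simp only [Pi.add_apply, neg_add]

variable [Fintype ι]

lemma signedCoord_le_norm (p : ι × Bool) (x : ι → ℝ) : signedCoord p x ≤ ‖x‖ := by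
  have hx : |x p.1| ≤ ‖x‖ := by simpa only [Real.norm_eq_abs] using norm_le_pi_norm x p.1
  unfold signedCoord
  split_ifs
  · exact (le_abs_self _).trans hx
  · exact (neg_le_abs _).trans hx

lemma exists_signedCoord_eq_norm [Nonempty ι] (x : ι → ℝ) : ∃ p, signedCoord p x = ‖x‖ := by
  obtain ⟨i, -, hi⟩ := Finset.univ.exists_mem_eq_sup Finset.univ_nonempty (fun i ↦ ‖x i‖₊)
  have hnorm : ‖x‖ = |x i| := by
    rw [← coe_nnnorm, Pi.nnnorm_def, hi, coe_nnnorm, Real.norm_eq_abs]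
  rcases le_or_gt 0 (x i) with h | h
  · exact ⟨(i, true), by simp [signedCoord, hnorm, abs_of_nonneg h]⟩
  · exact ⟨(i, false), by simp [signedCoord, hnorm, abs_of_neg h]⟩

namespace IsMSet

variable {S : Set (ι → ℝ)} (hS : IsMSet (ι → ℝ) S)
include hS

lemma signedCoord_add_le {x y : ι → ℝ} (hx : x ∈ S) (hy : y ∈ S) (hxy : x ≠ y)
    (p : ι × Bool) : signedCoord p x + signedCoord p y ≤ 2 := by
  rw [← signedCoord_add, ← hS.2 x hx y hy hxy]
  exact signedCoord_le_norm p (x + y)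

lemma exists_signedCoord_add_eq_two [Nonempty ι] {x y : ι → ℝ} (hx : x ∈ S) (hy : y ∈ S)
    (hxy : x ≠ y) : ∃ p, signedCoord p x + signedCoord p y = 2 := by
  obtain ⟨p, hp⟩ := exists_signedCoord_eq_norm (x + y)
  exact ⟨p, by rw [← signedCoord_add, hp, hS.2 x hx y hy hxy]⟩

lemma exists_one_lt_signedCoord [Nonempty ι] {x : ι → ℝ} (hx : x ∈ S) :
    ∃ p, 1 < signedCoord p x := by
  obtain ⟨p, hp⟩ := exists_signedCoord_eq_norm x
  exact ⟨p, hp ▸ hS.1 x hx⟩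

lemma eq_of_one_lt_signedCoord {x y : ι → ℝ} (hx : x ∈ S) (hy : y ∈ S) {p : ι × Bool}
    (hpx : 1 < signedCoord p x) (hpy : 1 < signedCoord p y) : x = y := by
  by_contra hxy
  linarith [hS.signedCoord_add_le hx hy hxy p]

/-- Here `3 < signedCoord (i, b) x`, so every `w ∈ S` other than `x` has
`signedCoord (i, b) w < -1`, like `y`; two such points cannot coexist. -/
lemma subset_pair_of_signedCoord_add_eq_two {x y : ι → ℝ} (hx : x ∈ S) (hy : y ∈ S)
    {i : ι} {b : Bool} (hsum : signedCoord (i, b) x + signedCoord (i, b) y = 2)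
    (hyb : signedCoord (i, b) y < -1) : S ⊆ {x, y} := by
  intro w hw
  by_contra hwxy
  simp only [Set.mem_insert_iff, Set.mem_singleton_iff, not_or] at hwxy
  have hwx := hS.signedCoord_add_le hw hx hwxy.1 (i, b)
  have hwy := hS.signedCoord_add_le hw hy hwxy.2 (i, !b)
  cases b <;> simp only [signedCoord, Bool.not_true, Bool.not_false, Bool.false_eq_true,
    ↓reduceIte] at hsum hyb hwx hwy <;> linarith

variable [Nonempty ι]

noncomputable def peak (x : S) : ι × Bool :=
  (hS.exists_one_lt_signedCoord x.2).choose

lemma one_lt_signedCoord_peak (x : S) : 1 < signedCoord (hS.peak x) x :=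
  (hS.exists_one_lt_signedCoord x.2).choose_spec

lemma peak_injective : Injective hS.peak := fun x y hxy ↦
  Subtype.ext <| hS.eq_of_one_lt_signedCoord x.2 y.2 (hS.one_lt_signedCoord_peak x)
    (hxy ▸ hS.one_lt_signedCoord_peak y)

lemma signedCoord_lt_one_of_ne_peak (hsurj : Surjective hS.peak) (x : S) {p : ι × Bool}
    (hp : p ≠ hS.peak x) : signedCoord p x < 1 := by
  obtain ⟨z, rfl⟩ := hsurj p
  have hzx : (z : ι → ℝ) ≠ x := fun h ↦ hp (congrArg hS.peak (Subtype.ext h))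
  linarith [hS.signedCoord_add_le z.2 x.2 hzx (hS.peak z), hS.one_lt_signedCoord_peak z]

lemma peak_not_surjective [Nontrivial ι] : ¬ Surjective hS.peak := by
  intro hsurj
  obtain ⟨i, j, hij⟩ := exists_pair_ne ι
  obtain ⟨a, ha⟩ := hsurj (i, true)
  obtain ⟨b, hb⟩ := hsurj (i, false)
  obtain ⟨c, hc⟩ := hsurj (j, true)
  have ha1 := ha ▸ hS.one_lt_signedCoord_peak a
  have hb1 := hb ▸ hS.one_lt_signedCoord_peak b
  have hab : (a : ι → ℝ) ≠ b := fun h ↦ by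
    simpa [ha, hb] using congrArg hS.peak (Subtype.ext h)
  obtain ⟨p, hp⟩ := hS.exists_signedCoord_add_eq_two a.2 b.2 hab
  have hsub : S ⊆ {(a : ι → ℝ), (b : ι → ℝ)} := by
    by_cases hpa : p = (i, true)
    · subst hpa
      refine hS.subset_pair_of_signedCoord_add_eq_two a.2 b.2 hp ?_
      simp only [signedCoord, Bool.false_eq_true, ↓reduceIte] at hb1 ⊢
      linarith
    by_cases hpb : p = (i, false)
    · subst hpb
      rw [Set.pair_comm]
      refine hS.subset_pair_of_signedCoord_add_eq_two b.2 a.2 (by rwa [add_comm]) ?_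
      simp only [signedCoord, Bool.false_eq_true, ↓reduceIte] at ha1 ⊢
      linarith
    have := hS.signedCoord_lt_one_of_ne_peak hsurj a (ha ▸ hpa)
    have := hS.signedCoord_lt_one_of_ne_peak hsurj b (hb ▸ hpb)
    linarith
  rcases hsub c.2 with hca | hcb
  · simpa [ha, hc, hij.symm] using congrArg hS.peak (Subtype.ext hca)
  · simpa [hb, hc] using congrArg hS.peak (Subtype.ext hcb)

lemma finite_s17 : S.Finite :=
  Set.finite_coe_iff.mp (Finite.of_injective _ hS.peak_injective)

lemma ncard_lt_two_mul_card [Nontrivial ι] : S.ncard < 2 * Fintype.card ι := by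
  have hlt : Nat.card S < Nat.card (ι × Bool) :=
    (Nat.card_le_card_of_injective _ hS.peak_injective).lt_of_ne fun h ↦
      hS.peak_not_surjective (hS.peak_injective.bijective_of_nat_card_le h.ge).2
  simpa [Nat.card_prod, mul_comm] using hlt

end IsMSet

theorem mset_sup_norm_upper (d : ℕ) (hd : 2 ≤ d)
    (S : Set (Fin d → ℝ)) (hS : IsMSet (Fin d → ℝ) S) :
    S.Finite ∧ S.ncard ≤ 2 * d - 1 := by
  have : Nontrivial (Fin d) := Fin.nontrivial_iff_two_le.mpr hd
  refine ⟨hS.finite_s17, ?_⟩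
  have := hS.ncard_lt_two_mul_card
  rw [Fintype.card_fin] at this
  omega
end
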